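/- The category HAsm of Herbrand assemblies over K₁ is locally cartesian closed: for every morphism f : B → A in HAsm, the base change (pullback) functor f* from the slice category HAsm/A to the slice category HAsm/B has a right adjoint Π_f. -/

import Mathlib

open CategoryTheory Encodable Denumerable

namespace Herbrand

/-- Kleene application in Kleene's first pca `K₁`: `e · n`. -/
def kap (e n : ℕ) : Part ℕ := Nat.Partrec.Code.eval (ofNat Nat.Partrec.Code e) n

/-- `kapIn r n S` : `r · n` is defined and its value lies in `S`. -/
def kapIn (r n : ℕ) (S : Set ℕ) : Prop := ∃ v ∈ kap r n, v ∈ S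

/-- The list coded by a natural number (canonical bijection `ℕ ≃ List ℕ`). -/
def toL (n : ℕ) : List ℕ := ofNat (List ℕ) n

/-- The code of a list of natural numbers. -/
def ofL (l : List ℕ) : ℕ := encode l

@[simp] lemma toL_ofL (l : List ℕ) : toL (ofL l) = l := ofNat_encode l

/-- `!A` : the set of codes of lists all of whose entries lie in `A`. -/
def bang (A : Set ℕ) : Set ℕ := {n | ∀ x ∈ toL n, x ∈ A}

/-- `m ⪯ n` : every entry of the list coded by `m` is an entry of the list coded by `n`. -/
def sle (m n : ℕ) : Prop := ∀ x ∈ toL m, x ∈ toL n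

lemma sle_refl (m : ℕ) : sle m m := fun _ hx => hx

lemma sle_trans {m n k : ℕ} (h1 : sle m n) (h2 : sle n k) : sle m k :=
  fun x hx => h2 x (h1 x hx)

/-- `S` is upward closed in `!A`. -/
def UpwardClosedIn (A S : Set ℕ) : Prop :=
  ∀ m ∈ S, ∀ n ∈ bang A, sle m n → n ∈ S

/-- `↑_{!A} S` : the set of `n ∈ !A` with `m ⪯ n` for some `m ∈ S`. -/
def upClo (A S : Set ℕ) : Set ℕ := {n | n ∈ bang A ∧ ∃ m ∈ S, sle m n}

lemma mem_bang_univ (n : ℕ) : n ∈ bang Set.univ := fun x _ => Set.mem_univ x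

/-- From a partial recursive function we get a `K₁`-code for it. -/
theorem exists_kap_eq {f : ℕ →. ℕ} (hf : Nat.Partrec f) : ∃ e, ∀ n, kap e n = f n := by
  obtain ⟨c, hc⟩ := Nat.Partrec.Code.exists_code.mp hf
  exact ⟨encode c, fun n => by simp [kap, hc]⟩


/-- A Herbrand assembly over `K₁`. -/
structure HAsmObj where
  carrier : Type
  real : Set ℕ
  rz : carrier → Set ℕ
  rz_sub : ∀ a, rz a ⊆ bang real
  rz_ne : ∀ a, (rz a).Nonempty
  rz_up : ∀ a, UpwardClosedIn real (rz a)

/-- `r ∈ ℕ` tracks the function `f` between the underlying sets of two Herbrand assemblies. -/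
def Tracks (B A : HAsmObj) (f : B.carrier → A.carrier) (r : ℕ) : Prop :=
  (∀ m ∈ bang B.real, kapIn r m (bang A.real)) ∧
  ∀ b : B.carrier, ∀ m ∈ B.rz b, kapIn r m (A.rz (f b))

/-- A morphism of Herbrand assemblies: a tracked function. -/
structure HHom (B A : HAsmObj) where
  toFun : B.carrier → A.carrier
  tracked : ∃ r, Tracks B A toFun r

theorem HHom.ext' {B A : HAsmObj} {f g : HHom B A} (h : f.toFun = g.toFun) : f = g := by
  cases f; cases g; simpa using h

theorem tracks_id_fun (B A : HAsmObj) (f : B.carrier → A.carrier)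
    (h1 : ∀ m ∈ bang B.real, m ∈ bang A.real)
    (h2 : ∀ b : B.carrier, ∀ m ∈ B.rz b, m ∈ A.rz (f b)) : ∃ r, Tracks B A f r := by
  obtain ⟨e, he⟩ := exists_kap_eq (Nat.Partrec.of_primrec Nat.Primrec.id)
  exact ⟨e, fun m hm => ⟨m, by simp [he], h1 m hm⟩,
    fun b m hm => ⟨m, by simp [he], h2 b m hm⟩⟩

theorem tracked_id (A : HAsmObj) : ∃ r, Tracks A A id r :=
  tracks_id_fun A A id (fun _ h => h) (fun _ _ h => h)

theorem tracked_comp {C B A : HAsmObj} {f : C.carrier → B.carrier} {g : B.carrier → A.carrier}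
    (hf : ∃ r, Tracks C B f r) (hg : ∃ s, Tracks B A g s) : ∃ t, Tracks C A (g ∘ f) t := by
  obtain ⟨r, hr1, hr2⟩ := hf
  obtain ⟨s, hs1, hs2⟩ := hg
  refine ⟨encode (Nat.Partrec.Code.comp (ofNat Nat.Partrec.Code s) (ofNat Nat.Partrec.Code r)),
    ?_, ?_⟩
  · intro m hm
    obtain ⟨v, hv, hv'⟩ := hr1 m hm
    obtain ⟨w, hw, hw'⟩ := hs1 v hv'
    exact ⟨w, by simp only [kap, Nat.Partrec.Code.eval, ofNat_encode]; exact Part.mem_bind_iff.mpr ⟨v, hv, hw⟩, hw'⟩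
  · intro c m hm
    obtain ⟨v, hv, hv'⟩ := hr2 c m hm
    obtain ⟨w, hw, hw'⟩ := hs2 (f c) v hv'
    exact ⟨w, by simp only [kap, Nat.Partrec.Code.eval, ofNat_encode]; exact Part.mem_bind_iff.mpr ⟨v, hv, hw⟩, hw'⟩

/-- The category `HAsm` of Herbrand assemblies over `K₁`. -/
instance : Category HAsmObj where
  Hom B A := HHom B A
  id A := ⟨id, tracked_id A⟩
  comp f g := ⟨g.toFun ∘ f.toFun, tracked_comp f.tracked g.tracked⟩
  id_comp f := HHom.ext' rfl
  comp_id f := HHom.ext' rfl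
  assoc f g h := HHom.ext' rfl


/-- The Herbrand assembly `∇X = (X, ℕ, x ↦ !ℕ)`. -/
def nablaObj (X : Type) : HAsmObj where
  carrier := X
  real := Set.univ
  rz _ := bang Set.univ
  rz_sub _ := fun _ h => h
  rz_ne _ := ⟨0, mem_bang_univ 0⟩
  rz_up _ := fun _ _ n hn _ => hn

/-- The functor `∇ : Set → HAsm`. -/
def Nabla : Type ⥤ HAsmObj where
  obj := nablaObj
  map f := ⟨f, tracks_id_fun _ _ f (fun _ h => h) (fun _ _ h => h)⟩
  map_id _ := HHom.ext' rfl
  map_comp _ _ := HHom.ext' rfl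

/-- The underlying-set functor `Γ : HAsm → Set`. -/
def Gamma : HAsmObj ⥤ Type where
  obj A := A.carrier
  map f := TypeCat.ofHom f.toFun

/-- The realizability structure of the natural numbers object: `ν n = ↑_{!ℕ} {⟨n⟩}`. -/
def nuN (n : ℕ) : Set ℕ := upClo Set.univ {ofL [n]}

/-- The natural numbers object `N = (ℕ, ℕ, ν)` of `HAsm`. -/
def NObj : HAsmObj where
  carrier := ℕ
  real := Set.univ
  rz := nuN
  rz_sub _ := fun _ hm => hm.1
  rz_ne n := ⟨ofL [n], mem_bang_univ _, ofL [n], rfl, sle_refl _⟩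
  rz_up _ := fun m hm k hk hmk => ⟨hk, hm.2.choose, hm.2.choose_spec.1,
    sle_trans hm.2.choose_spec.2 hmk⟩

/-- The terminal object `1 = ({*}, ℕ, * ↦ !ℕ)` of `HAsm`. -/
def oneObj : HAsmObj := nablaObj PUnit

/-- The zero morphism `0 : 1 ⟶ N`. -/
def zeroH : oneObj ⟶ NObj := by
  refine ⟨fun _ => (0 : ℕ), ?_⟩
  obtain ⟨e, he⟩ := exists_kap_eq (Nat.Partrec.of_primrec (Nat.Primrec.const (ofL [0])))
  exact ⟨e, fun m _ => ⟨ofL [0], by simp [he], mem_bang_univ _⟩,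
    fun b m _ => ⟨ofL [0], by simp [he], mem_bang_univ _, ofL [0], rfl, sle_refl _⟩⟩

/-- The successor morphism `s : N ⟶ N`. -/
def succH : NObj ⟶ NObj := by
  refine ⟨(Nat.succ : ℕ → ℕ), ?_⟩
  have hp : Primrec (fun m : ℕ => ofL ((toL m).map Nat.succ)) :=
    Primrec.encode.comp ((Primrec.ofNat (List ℕ)).list_map
      ((Primrec.succ.comp Primrec.snd).to₂))
  obtain ⟨e, he⟩ := exists_kap_eq (Nat.Partrec.of_primrec (Primrec.nat_iff.mp hp))
  refine ⟨e, fun m _ => ⟨ofL ((toL m).map Nat.succ), by simp [he], mem_bang_univ _⟩, ?_⟩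
  rintro (n : ℕ) m hm
  refine ⟨ofL ((toL m).map Nat.succ), by simp [he], mem_bang_univ _, ofL [n + 1], rfl, ?_⟩
  intro x hx
  have hn : n ∈ toL m := hm.2.choose_spec.2 n (by
    have : hm.2.choose = ofL [n] := hm.2.choose_spec.1
    rw [this]; simp)
  have hx' : x = n + 1 := by simpa using hx
  subst hx'
  simp only [toL_ofL, List.mem_map]
  exact ⟨n, hn, rfl⟩

/-!
A product of Herbrand assemblies is realized by merging a realizer list of each factor into one
list over the tagged union of the two realizer sets; pullbacks and dependent products are
subassemblies of products. A point of `Π_f Y` over `a` is a section `s` of `Y` over the fibre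
`f⁻¹(a)` that has a realizer: a finite list of codes, total on `!ℬ`, such that for every `b` in
the fibre and every realizer of `b` *some* code of the list yields a realizer of `s b`.
Transposing `v : f*Z ⟶ Y` curries a tracker of `v` (s-m-n) into a one-element list; the counit
runs all codes of the list in parallel and concatenates their outputs, and upward closure makes
the result a realizer.
-/

open Nat.Partrec (Code)
open Nat.Partrec.Code CategoryTheory.Limits

@[simp] lemma ofL_toL (n : ℕ) : ofL (toL n) = n := encode_ofNat n

lemma primrec_toL : Primrec toL := Primrec.ofNat _

lemma primrec_ofL : Primrec ofL := Primrec.encode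

lemma partrec₂_kap : Partrec₂ kap :=
  eval_part.comp ((Computable.ofNat Code).comp .fst) .snd

lemma partrec_kap (r : ℕ) : Partrec (kap r) := partrec₂_kap.comp (.const r) .id

theorem exists_primrec_kap_eq {f : ℕ → ℕ →. ℕ} (hf : Partrec₂ f) :
    ∃ s : ℕ → ℕ, Primrec s ∧ ∀ m k, kap (s m) k = f m k := by
  obtain ⟨c, hc⟩ := exists_code.mp (Partrec.nat_iff.mp
    (hf.comp (Computable.fst.comp .unpair) (Computable.snd.comp .unpair)))
  refine ⟨fun m => encode (curry c m), Primrec.encode.comp (primrec₂_curry.comp (.const c) .id),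
    fun m k => ?_⟩
  simp [kap, eval_curry, hc]

theorem exists_tracks_of_partrec {B A : HAsmObj} {f : B.carrier → A.carrier} {g : ℕ →. ℕ}
    (hg : Partrec g) (h_real : ∀ m ∈ bang B.real, ∃ v ∈ g m, v ∈ bang A.real)
    (h_rz : ∀ b, ∀ m ∈ B.rz b, ∃ v ∈ g m, v ∈ A.rz (f b)) : ∃ r, Tracks B A f r := by
  obtain ⟨e, he⟩ := exists_kap_eq (Partrec.nat_iff.mp hg)
  exact ⟨e, by simpa only [Tracks, kapIn, he] using And.intro h_real h_rz⟩

theorem exists_tracks_of_computable {B A : HAsmObj} {f : B.carrier → A.carrier} {g : ℕ → ℕ}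
    (hg : Computable g) (h_real : ∀ m ∈ bang B.real, g m ∈ bang A.real)
    (h_rz : ∀ b, ∀ m ∈ B.rz b, g m ∈ A.rz (f b)) : ∃ r, Tracks B A f r :=
  exists_tracks_of_partrec hg (fun m hm => ⟨g m, Part.mem_some _, h_real m hm⟩)
    (fun b m hm => ⟨g m, Part.mem_some _, h_rz b m hm⟩)

def sumSet (S T : Set ℕ) : Set ℕ := {n | Sum.elim (· ∈ S) (· ∈ T) (ofNat (ℕ ⊕ ℕ) n)}

def pairL (u v : ℕ) : ℕ :=
  ofL ((toL u).map (encode ∘ @Sum.inl ℕ ℕ) ++ (toL v).map (encode ∘ @Sum.inr ℕ ℕ))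

def fstL (m : ℕ) : ℕ := ofL ((toL m).filterMap fun n => (ofNat (ℕ ⊕ ℕ) n).getLeft?)

def sndL (m : ℕ) : ℕ := ofL ((toL m).filterMap fun n => (ofNat (ℕ ⊕ ℕ) n).getRight?)

@[simp] lemma encode_inl_mem_sumSet {S T : Set ℕ} {x : ℕ} :
    encode (Sum.inl x : ℕ ⊕ ℕ) ∈ sumSet S T ↔ x ∈ S := by
  simp only [sumSet, Set.mem_ofPred_eq, ofNat_encode, Sum.elim_inl]

@[simp] lemma encode_inr_mem_sumSet {S T : Set ℕ} {x : ℕ} :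
    encode (Sum.inr x : ℕ ⊕ ℕ) ∈ sumSet S T ↔ x ∈ T := by
  simp only [sumSet, Set.mem_ofPred_eq, ofNat_encode, Sum.elim_inr]

lemma mem_toL_fstL {m x : ℕ} :
    x ∈ toL (fstL m) ↔ encode (Sum.inl x : ℕ ⊕ ℕ) ∈ toL m := by
  simp only [fstL, toL_ofL, List.mem_filterMap, Sum.getLeft?_eq_some_iff]
  constructor
  · rintro ⟨n, hn, hx⟩
    rwa [← hx, encode_ofNat]
  · exact fun h => ⟨_, h, ofNat_encode _⟩

lemma mem_toL_sndL {m x : ℕ} :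
    x ∈ toL (sndL m) ↔ encode (Sum.inr x : ℕ ⊕ ℕ) ∈ toL m := by
  simp only [sndL, toL_ofL, List.mem_filterMap, Sum.getRight?_eq_some_iff]
  constructor
  · rintro ⟨n, hn, hx⟩
    rwa [← hx, encode_ofNat]
  · exact fun h => ⟨_, h, ofNat_encode _⟩

@[simp] lemma fstL_pairL (u v : ℕ) : fstL (pairL u v) = u := by
  simp only [fstL, pairL, toL_ofL, List.filterMap_append, List.filterMap_map, Function.comp_def,
    ofNat_encode, Sum.getLeft?_inl, Sum.getLeft?_inr, List.filterMap_some, List.filterMap_none,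
    List.append_nil, ofL_toL]

@[simp] lemma sndL_pairL (u v : ℕ) : sndL (pairL u v) = v := by
  simp only [sndL, pairL, toL_ofL, List.filterMap_append, List.filterMap_map, Function.comp_def,
    ofNat_encode, Sum.getRight?_inl, Sum.getRight?_inr, List.filterMap_some, List.filterMap_none,
    List.nil_append, ofL_toL]

lemma pairL_mem_bang {S T : Set ℕ} {u v : ℕ} (hu : u ∈ bang S) (hv : v ∈ bang T) :
    pairL u v ∈ bang (sumSet S T) := by
  intro x hx
  simp only [pairL, toL_ofL, List.mem_append, List.mem_map, Function.comp_apply] at hx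
  rcases hx with ⟨y, hy, rfl⟩ | ⟨y, hy, rfl⟩
  · exact encode_inl_mem_sumSet.mpr (hu y hy)
  · exact encode_inr_mem_sumSet.mpr (hv y hy)

lemma fstL_mem_bang {S T : Set ℕ} {m : ℕ} (hm : m ∈ bang (sumSet S T)) : fstL m ∈ bang S :=
  fun _ hx => encode_inl_mem_sumSet.mp (hm _ (mem_toL_fstL.mp hx))

lemma sndL_mem_bang {S T : Set ℕ} {m : ℕ} (hm : m ∈ bang (sumSet S T)) : sndL m ∈ bang T :=
  fun _ hx => encode_inr_mem_sumSet.mp (hm _ (mem_toL_sndL.mp hx))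

lemma sle_fstL {m n : ℕ} (h : sle m n) : sle (fstL m) (fstL n) :=
  fun _ hx => mem_toL_fstL.mpr (h _ (mem_toL_fstL.mp hx))

lemma sle_sndL {m n : ℕ} (h : sle m n) : sle (sndL m) (sndL n) :=
  fun _ hx => mem_toL_sndL.mpr (h _ (mem_toL_sndL.mp hx))

lemma primrec_pairL : Primrec₂ pairL :=
  primrec_ofL.comp (Primrec.list_append.comp
    (Primrec.list_map (primrec_toL.comp .fst)
      ((Primrec.encode.comp Primrec.sumInl).comp .snd).to₂)
    (Primrec.list_map (primrec_toL.comp .snd)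
      ((Primrec.encode.comp Primrec.sumInr).comp .snd).to₂))

lemma primrec_fstL : Primrec fstL := by
  refine primrec_ofL.comp (Primrec.listFilterMap primrec_toL ?_)
  refine (Primrec.sumCasesOn ((Primrec.ofNat (ℕ ⊕ ℕ)).comp .snd)
    (Primrec.option_some.comp .snd).to₂ (Primrec.const none).to₂).of_eq fun p => ?_
  dsimp only
  cases ofNat (ℕ ⊕ ℕ) p.2 <;> rfl

lemma primrec_sndL : Primrec sndL := by
  refine primrec_ofL.comp (Primrec.listFilterMap primrec_toL ?_)
  refine (Primrec.sumCasesOn ((Primrec.ofNat (ℕ ⊕ ℕ)).comp .snd)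
    (Primrec.const none).to₂ (Primrec.option_some.comp .snd).to₂).of_eq fun p => ?_
  dsimp only
  cases ofNat (ℕ ⊕ ℕ) p.2 <;> rfl

def totalCodes (S T : Set ℕ) : Set ℕ := {e | ∀ k ∈ bang S, kapIn e k (bang T)}

def evalAllAt (l k t : ℕ) : Option ℕ :=
  if ∀ e ∈ toL l, (evaln t (ofNat Code e) k).isSome then
    some (ofL ((toL l).flatMap fun e => toL ((evaln t (ofNat Code e) k).getD 0)))
  else none

def evalAll (l k : ℕ) : Part ℕ := Nat.rfindOpt (evalAllAt l k)

lemma partrec₂_evalAll : Partrec₂ evalAll := by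
  have hevaln :
      Primrec fun q : ℕ × (ℕ × ℕ) × ℕ => evaln q.2.2 (ofNat Code q.1) q.2.1.2 :=
    primrec_evaln.comp (.pair (.pair (.comp .snd .snd) ((Primrec.ofNat Code).comp .fst))
      (.comp .snd (.comp .fst .snd)))
  have hall : PrimrecPred fun q : (ℕ × ℕ) × ℕ =>
      ∀ e ∈ toL q.1.1, (evaln q.2 (ofNat Code e) q.1.2).isSome := by
    have hR : PrimrecRel fun (e : ℕ) (q : (ℕ × ℕ) × ℕ) =>
        (evaln q.2 (ofNat Code e) q.1.2).isSome :=
      Primrec.eq.comp (Primrec.option_isSome.comp hevaln) (.const true)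
    exact hR.forall_mem_list.comp (primrec_toL.comp (.comp .fst .fst)) .id
  have hval : Primrec fun q : (ℕ × ℕ) × ℕ =>
      ofL ((toL q.1.1).flatMap fun e => toL ((evaln q.2 (ofNat Code e) q.1.2).getD 0)) :=
    primrec_ofL.comp (Primrec.list_flatMap (primrec_toL.comp (.comp .fst .fst))
      (primrec_toL.comp
        (Primrec.option_getD.comp (hevaln.comp (.pair .snd .fst)) (.const 0))).to₂)
  exact Partrec.rfindOpt (Primrec.ite hall (Primrec.option_some.comp hval) (.const none)).to_comp

lemma mem_toL_of_mem_evalAllAt {l k t w : ℕ} (hw : w ∈ evalAllAt l k t) (x : ℕ) :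
    x ∈ toL w ↔ ∃ e ∈ toL l, ∃ v ∈ kap e k, x ∈ toL v := by
  unfold evalAllAt at hw
  split_ifs at hw with hall
  · obtain rfl := Option.some_injective _ hw
    simp only [toL_ofL, List.mem_flatMap]
    refine exists_congr fun e => and_congr_right fun he => ?_
    obtain ⟨v, hv⟩ := Option.isSome_iff_exists.mp (hall e he)
    have hv' : v ∈ kap e k := evaln_sound hv
    rw [hv, Option.getD_some]
    exact ⟨fun hx => ⟨v, hv', hx⟩,
      fun ⟨v', hv'', hx⟩ => Part.mem_unique hv'' hv' ▸ hx⟩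
  · exact absurd hw (Option.not_mem_none _)

lemma exists_evalAllAt_isSome {l k : ℕ} (h : ∀ e ∈ toL l, (kap e k).Dom) :
    ∃ t, (evalAllAt l k t).isSome := by
  choose! T hT using fun e (he : e ∈ toL l) => evaln_complete.mp (Part.get_mem (h e he))
  refine ⟨((toL l).map T).sum, ?_⟩
  rw [evalAllAt, if_pos fun e he => ?_, Option.isSome_some]
  exact Option.isSome_iff_exists.mpr
    ⟨_, evaln_mono (List.le_sum_of_mem (List.mem_map_of_mem he)) (hT e he)⟩

theorem evalAll_spec {l k : ℕ} (h : ∀ e ∈ toL l, (kap e k).Dom) :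
    ∃ w ∈ evalAll l k, ∀ x,
      x ∈ toL w ↔ ∃ e ∈ toL l, ∃ v ∈ kap e k, x ∈ toL v := by
  obtain ⟨t, ht⟩ := exists_evalAllAt_isSome h
  have hdom : (evalAll l k).Dom := Nat.rfindOpt_dom.mpr ⟨t, _, Option.get_mem ht⟩
  obtain ⟨n, hn⟩ := Nat.rfindOpt_spec (Part.get_mem hdom)
  exact ⟨_, Part.get_mem hdom, mem_toL_of_mem_evalAllAt hn⟩

theorem exists_evalAll_mem_bang {S T : Set ℕ} {l k : ℕ} (hl : l ∈ bang (totalCodes S T))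
    (hk : k ∈ bang S) :
    ∃ w ∈ evalAll l k, w ∈ bang T ∧ ∀ e ∈ toL l, ∀ v ∈ kap e k, sle v w := by
  obtain ⟨w, hw, hspec⟩ := evalAll_spec fun e he =>
    let ⟨v, hv, _⟩ := hl e he k hk
    Part.dom_iff_mem.mpr ⟨v, hv⟩
  refine ⟨w, hw, fun x hx => ?_, fun e he v hv x hx => (hspec x).mpr ⟨e, he, v, hv, hx⟩⟩
  obtain ⟨e, he, v, hv, hxv⟩ := (hspec x).mp hx
  obtain ⟨v', hv', hv'T⟩ := hl e he k hk
  exact hv'T x (Part.mem_unique hv hv' ▸ hxv)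

def prodObj (X Y : HAsmObj) : HAsmObj where
  carrier := X.carrier × Y.carrier
  real := sumSet X.real Y.real
  rz p := {m | m ∈ bang (sumSet X.real Y.real) ∧ fstL m ∈ X.rz p.1 ∧ sndL m ∈ Y.rz p.2}
  rz_sub _ _ hm := hm.1
  rz_ne p := by
    obtain ⟨u, hu⟩ := X.rz_ne p.1
    obtain ⟨v, hv⟩ := Y.rz_ne p.2
    exact ⟨pairL u v, pairL_mem_bang (X.rz_sub _ hu) (Y.rz_sub _ hv), by rwa [fstL_pairL],
      by rwa [sndL_pairL]⟩
  rz_up p := by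
    rintro m ⟨-, hmX, hmY⟩ n hn hmn
    exact ⟨hn, X.rz_up _ _ hmX _ (fstL_mem_bang hn) (sle_fstL hmn),
      Y.rz_up _ _ hmY _ (sndL_mem_bang hn) (sle_sndL hmn)⟩

lemma pairL_mem_prodObj_rz {X Y : HAsmObj} {x : X.carrier} {y : Y.carrier} {u v : ℕ}
    (hu : u ∈ X.rz x) (hv : v ∈ Y.rz y) : pairL u v ∈ (prodObj X Y).rz (x, y) :=
  ⟨pairL_mem_bang (X.rz_sub _ hu) (Y.rz_sub _ hv), by rwa [fstL_pairL], by rwa [sndL_pairL]⟩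

lemma tracked_fst (X Y : HAsmObj) : ∃ r, Tracks (prodObj X Y) X Prod.fst r :=
  exists_tracks_of_computable primrec_fstL.to_comp (fun _ hm => fstL_mem_bang hm)
    (fun _ _ hm => hm.2.1)

lemma tracked_snd (X Y : HAsmObj) : ∃ r, Tracks (prodObj X Y) Y Prod.snd r :=
  exists_tracks_of_computable primrec_sndL.to_comp (fun _ hm => sndL_mem_bang hm)
    (fun _ _ hm => hm.2.2)

lemma tracked_prodMk {W X Y : HAsmObj} {f : W.carrier → X.carrier} {g : W.carrier → Y.carrier}
    (hf : ∃ r, Tracks W X f r) (hg : ∃ r, Tracks W Y g r) :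
    ∃ r, Tracks W (prodObj X Y) (fun w => (f w, g w)) r := by
  obtain ⟨rf, hf_real, hf_rz⟩ := hf
  obtain ⟨rg, hg_real, hg_rz⟩ := hg
  have hpair : Partrec fun m => (kap rf m).bind fun u => (kap rg m).map (pairL u) :=
    (partrec_kap rf).bind (((partrec_kap rg).comp .fst).map
      (primrec_pairL.comp (.comp .snd .fst) .snd).to_comp.to₂).to₂
  refine exists_tracks_of_partrec hpair (fun m hm => ?_) (fun w m hm => ?_)
  · obtain ⟨u, hu, huX⟩ := hf_real m hm
    obtain ⟨v, hv, hvY⟩ := hg_real m hm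
    exact ⟨pairL u v, Part.mem_bind hu (Part.mem_map _ hv), pairL_mem_bang huX hvY⟩
  · obtain ⟨u, hu, huX⟩ := hf_rz w m hm
    obtain ⟨v, hv, hvY⟩ := hg_rz w m hm
    exact ⟨pairL u v, Part.mem_bind hu (Part.mem_map _ hv), pairL_mem_prodObj_rz huX hvY⟩

def HAsmObj.induced (Z : HAsmObj) {I : Type} (k : I → Z.carrier) : HAsmObj where
  carrier := I
  real := Z.real
  rz i := Z.rz (k i)
  rz_sub i := Z.rz_sub (k i)
  rz_ne i := Z.rz_ne (k i)
  rz_up i := Z.rz_up (k i)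

lemma Tracks.precomp_induced {Z W : HAsmObj} {g : Z.carrier → W.carrier} {r : ℕ}
    (h : Tracks Z W g r) {I : Type} (k : I → Z.carrier) : Tracks (Z.induced k) W (g ∘ k) r :=
  ⟨h.1, fun i => h.2 (k i)⟩

lemma over_w_apply {B : HAsmObj} {Y Y' : Over B} (t : Y ⟶ Y') (y : Y.left.carrier) :
    Y'.hom.toFun (t.left.toFun y) = Y.hom.toFun y :=
  congrFun (congrArg HHom.toFun (Over.w t)) y

lemma over_hom_ext {B : HAsmObj} {Y Y' : Over B} {t t' : Y ⟶ Y'}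
    (h : t.left.toFun = t'.left.toFun) : t = t' :=
  Over.OverMorphism.ext (HHom.ext' h)

section Pullback

variable {X Y A : HAsmObj} (g : X ⟶ A) (h : Y ⟶ A)

def pbObj : HAsmObj :=
  (prodObj X Y).induced
    (Subtype.val : {p : X.carrier × Y.carrier // g.toFun p.1 = h.toFun p.2} → _)

def pbFst : pbObj g h ⟶ X :=
  ⟨fun p => p.1.1, (tracked_fst X Y).imp fun _ hr => hr.precomp_induced _⟩

def pbSnd : pbObj g h ⟶ Y :=
  ⟨fun p => p.1.2, (tracked_snd X Y).imp fun _ hr => hr.precomp_induced _⟩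

variable {g h} in
def pbLift {W : HAsmObj} (u : W ⟶ X) (v : W ⟶ Y)
    (hc : ∀ w, g.toFun (u.toFun w) = h.toFun (v.toFun w)) : W ⟶ pbObj g h :=
  ⟨fun w => ⟨(u.toFun w, v.toFun w), hc w⟩, tracked_prodMk u.tracked v.tracked⟩

def pbIsLimit :
    IsLimit (PullbackCone.mk (pbFst g h) (pbSnd g h) (HHom.ext' (funext fun p => p.2))) :=
  PullbackCone.IsLimit.mk _
    (fun s => pbLift s.fst s.snd fun w => congrFun (congrArg HHom.toFun s.condition) w)
    (fun _ => HHom.ext' rfl) (fun _ => HHom.ext' rfl)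
    (fun _ _ h₁ h₂ => HHom.ext' (funext fun w => Subtype.ext (Prod.ext
      (congrFun (congrArg HHom.toFun h₁) w) (congrFun (congrArg HHom.toFun h₂) w))))

end Pullback

instance : HasPullbacks HAsmObj :=
  @hasPullbacks_of_hasLimit_cospan _ _ fun {_ _ _ g h} => HasLimit.mk ⟨_, pbIsLimit g h⟩

section LocallyCartesianClosed

variable {A B : HAsmObj}

def baseChange (f : B ⟶ A) : Over A ⥤ Over B where
  obj Z := Over.mk (pbFst f Z.hom)
  map {Z _} t := Over.homMk
    (pbLift (pbFst f Z.hom) (pbSnd f Z.hom ≫ t.left)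
      fun p => p.2.trans (over_w_apply t p.1.2).symm)
    (HHom.ext' rfl)
  map_id _ := over_hom_ext rfl
  map_comp _ _ := over_hom_ext rfl

def mapBaseChangeAdj (f : B ⟶ A) : Over.map f ⊣ baseChange f :=
  Adjunction.mkOfHomEquiv
    { homEquiv W Z :=
        { toFun u := Over.homMk
            (pbLift W.hom u.left fun w => (over_w_apply u w).symm) (HHom.ext' rfl)
          invFun v := Over.homMk (v.left ≫ pbSnd f Z.hom)
            (HHom.ext' (funext fun w => (v.left.toFun w).2.symm.trans
              (congrArg f.toFun (over_w_apply v w))))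
          left_inv _ := over_hom_ext rfl
          right_inv v := over_hom_ext (funext fun w =>
            Subtype.ext (Prod.ext (over_w_apply v w).symm rfl)) }
      homEquiv_naturality_left_symm _ _ := over_hom_ext rfl
      homEquiv_naturality_right _ _ := over_hom_ext rfl }

def secRz (f : B ⟶ A) (Y : HAsmObj) {a : A.carrier} (s : ∀ b, f.toFun b = a → Y.carrier) :
    Set ℕ :=
  {n | n ∈ bang (totalCodes B.real Y.real) ∧
    ∀ b hb, ∀ k ∈ B.rz b, ∃ e ∈ toL n, kapIn e k (Y.rz (s b hb))}

structure PiCarrier {Y : HAsmObj} (f : B ⟶ A) (p : Y ⟶ B) where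
  pt : A.carrier
  sec : ∀ b, f.toFun b = pt → Y.carrier
  sec_over : ∀ b hb, p.toFun (sec b hb) = b
  realized : (secRz f Y sec).Nonempty

lemma PiCarrier.ext {Y : HAsmObj} {f : B ⟶ A} {p : Y ⟶ B} {x y : PiCarrier f p}
    (h_pt : x.pt = y.pt) (h_sec : ∀ b hb hb', x.sec b hb = y.sec b hb') : x = y := by
  obtain ⟨a, s, _, _⟩ := x
  obtain ⟨a', s', _, _⟩ := y
  obtain rfl : a = a' := h_pt
  obtain rfl : s = s' := funext fun b => funext fun hb => h_sec b hb hb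
  rfl

def sectionsObj {Y : HAsmObj} (f : B ⟶ A) (p : Y ⟶ B) : HAsmObj where
  carrier := PiCarrier f p
  real := totalCodes B.real Y.real
  rz x := secRz f Y x.sec
  rz_sub _ _ hn := hn.1
  rz_ne x := x.realized
  rz_up _ := by
    rintro m ⟨-, hm⟩ n hn hmn
    refine ⟨hn, fun b hb k hk => ?_⟩
    obtain ⟨e, he, hek⟩ := hm b hb k hk
    exact ⟨e, hmn e he, hek⟩

def piObj {Y : HAsmObj} (f : B ⟶ A) (p : Y ⟶ B) : HAsmObj :=
  (prodObj A (sectionsObj f p)).induced fun x => (x.pt, x)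

def piProj {Y : HAsmObj} (f : B ⟶ A) (p : Y ⟶ B) : piObj f p ⟶ A :=
  ⟨PiCarrier.pt, (tracked_fst _ _).imp fun _ hr => hr.precomp_induced _⟩

lemma tracked_piSnd {Y : HAsmObj} (f : B ⟶ A) (p : Y ⟶ B) :
    ∃ r, Tracks (piObj f p) (sectionsObj f p) id r :=
  (tracked_snd _ _).imp fun _ hr => hr.precomp_induced _

lemma exists_secRz_postcomp (f : B ⟶ A) {Y Y' : HAsmObj} (t : Y ⟶ Y') :
    ∃ g : ℕ → ℕ, Computable g ∧
      (∀ n ∈ bang (totalCodes B.real Y.real), g n ∈ bang (totalCodes B.real Y'.real)) ∧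
      ∀ {a} (s : ∀ b, f.toFun b = a → Y.carrier) n, n ∈ secRz f Y s →
        g n ∈ secRz f Y' fun b hb => t.toFun (s b hb) := by
  obtain ⟨rt, ht_real, ht_rz⟩ := t.tracked
  obtain ⟨c, hc, hkap⟩ := exists_primrec_kap_eq (f := fun e k => (kap e k).bind (kap rt))
    (partrec₂_kap.bind ((partrec_kap rt).comp .snd).to₂)
  have hcomp {e k v w : ℕ} (hv : v ∈ kap e k) (hw : w ∈ kap rt v) : w ∈ kap (c e) k :=
    hkap e k ▸ Part.mem_bind hv hw
  have hbang : ∀ n ∈ bang (totalCodes B.real Y.real),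
      ofL ((toL n).map c) ∈ bang (totalCodes B.real Y'.real) := by
    intro n hn x hx
    simp only [toL_ofL, List.mem_map] at hx
    obtain ⟨e, he, rfl⟩ := hx
    intro k hk
    obtain ⟨v, hv, hvY⟩ := hn e he k hk
    obtain ⟨w, hw, hwY'⟩ := ht_real v hvY
    exact ⟨w, hcomp hv hw, hwY'⟩
  refine ⟨fun n => ofL ((toL n).map c),
    (primrec_ofL.comp (Primrec.list_map primrec_toL (hc.comp .snd).to₂)).to_comp, hbang,
    fun s n hn => ⟨hbang n hn.1, fun b hb k hk => ?_⟩⟩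
  obtain ⟨e, he, v, hv, hvY⟩ := hn.2 b hb k hk
  obtain ⟨w, hw, hwY'⟩ := ht_rz _ v hvY
  exact ⟨c e, by simpa only [toL_ofL] using List.mem_map_of_mem he, w, hcomp hv hw, hwY'⟩

def PiCarrier.map (f : B ⟶ A) {Y Y' : Over B} (t : Y ⟶ Y') (x : PiCarrier f Y.hom) :
    PiCarrier f Y'.hom where
  pt := x.pt
  sec b hb := t.left.toFun (x.sec b hb)
  sec_over b hb := (over_w_apply t _).trans (x.sec_over b hb)
  realized := by
    obtain ⟨g, -, -, hg⟩ := exists_secRz_postcomp f t.left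
    obtain ⟨n, hn⟩ := x.realized
    exact ⟨g n, hg _ n hn⟩

lemma tracked_piCarrier_map (f : B ⟶ A) {Y Y' : Over B} (t : Y ⟶ Y') :
    ∃ r, Tracks (sectionsObj f Y.hom) (sectionsObj f Y'.hom) (PiCarrier.map f t) r := by
  obtain ⟨g, hg, hbang, hrz⟩ := exists_secRz_postcomp f t.left
  exact exists_tracks_of_computable hg hbang fun x => hrz x.sec

def piF (f : B ⟶ A) : Over B ⥤ Over A where
  obj Y := Over.mk (piProj f Y.hom)
  map t := Over.homMk ⟨PiCarrier.map f t, tracked_prodMk (piProj f _).tracked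
    (tracked_comp (tracked_piSnd f _) (tracked_piCarrier_map f t))⟩ (HHom.ext' rfl)
  map_id _ := over_hom_ext (funext fun _ => PiCarrier.ext rfl fun _ _ _ => rfl)
  map_comp _ _ := over_hom_ext (funext fun _ => PiCarrier.ext rfl fun _ _ _ => rfl)

lemma exists_secRz_curry (f : B ⟶ A) {Y Z : HAsmObj} (h : Z ⟶ A) (v : pbObj f h ⟶ Y) :
    ∃ g : ℕ → ℕ, Computable g ∧
      (∀ m ∈ bang Z.real, g m ∈ bang (totalCodes B.real Y.real)) ∧
      ∀ z, ∀ m ∈ Z.rz z,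
        g m ∈ secRz f Y (a := h.toFun z) fun b hb => v.toFun ⟨(b, z), hb⟩ := by
  obtain ⟨rv, hv_real, hv_rz⟩ := v.tracked
  obtain ⟨s, hs, hkap⟩ := exists_primrec_kap_eq (f := fun m k => kap rv (pairL k m))
    ((partrec_kap rv).comp (primrec_pairL.comp .snd .fst).to_comp)
  have hbang : ∀ m ∈ bang Z.real, ofL [s m] ∈ bang (totalCodes B.real Y.real) := by
    intro m hm e he k hk
    obtain rfl : e = s m := by simpa only [toL_ofL, List.mem_singleton] using he
    simpa only [kapIn, hkap] using hv_real _ (pairL_mem_bang hk hm)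
  refine ⟨fun m => ofL [s m],
    (primrec_ofL.comp (Primrec.list_cons.comp hs (.const []))).to_comp, hbang,
    fun z m hm => ⟨hbang m (Z.rz_sub z hm), fun b hb k hk => ⟨s m, by simp, ?_⟩⟩⟩
  simpa only [kapIn, hkap] using hv_rz ⟨(b, z), hb⟩ _ (pairL_mem_prodObj_rz hk hm)

def PiCarrier.curry (f : B ⟶ A) {Z : Over A} {Y : Over B} (v : (baseChange f).obj Z ⟶ Y)
    (z : Z.left.carrier) : PiCarrier f Y.hom where
  pt := Z.hom.toFun z
  sec b hb := v.left.toFun ⟨(b, z), hb⟩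
  sec_over b hb := over_w_apply v ⟨(b, z), hb⟩
  realized := by
    obtain ⟨g, -, -, hg⟩ := exists_secRz_curry f Z.hom v.left
    obtain ⟨m, hm⟩ := Z.left.rz_ne z
    exact ⟨g m, hg z m hm⟩

def curryHom (f : B ⟶ A) {Z : Over A} {Y : Over B} (v : (baseChange f).obj Z ⟶ Y) :
    Z.left ⟶ piObj f Y.hom :=
  ⟨PiCarrier.curry f v, tracked_prodMk Z.hom.tracked (by
    obtain ⟨g, hg, hbang, hrz⟩ := exists_secRz_curry f Z.hom v.left
    exact exists_tracks_of_computable hg hbang hrz)⟩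

lemma tracked_piEval (f : B ⟶ A) {Y : HAsmObj} (p : Y ⟶ B) :
    ∃ r, Tracks (pbObj f (piProj f p)) Y (fun q => q.1.2.sec q.1.1 q.2) r := by
  refine exists_tracks_of_partrec (g := fun m => evalAll (sndL (sndL m)) (fstL m))
    (partrec₂_evalAll.comp (primrec_sndL.comp primrec_sndL).to_comp primrec_fstL.to_comp)
    (fun m hm => ?_) ?_
  · obtain ⟨w, hw, hwY, -⟩ :=
      exists_evalAll_mem_bang (sndL_mem_bang (sndL_mem_bang hm)) (fstL_mem_bang hm)
    exact ⟨w, hw, hwY⟩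
  · rintro ⟨⟨b, x⟩, hb⟩ m ⟨-, hmB, -, -, hmSec⟩
    obtain ⟨w, hw, hwY, hle⟩ := exists_evalAll_mem_bang hmSec.1 (B.rz_sub b hmB)
    obtain ⟨e, he, v, hv, hvY⟩ := hmSec.2 b hb (fstL m) hmB
    exact ⟨w, hw, Y.rz_up _ v hvY w hwY (hle e he v hv)⟩

def piCounit (f : B ⟶ A) (Y : Over B) : (baseChange f).obj ((piF f).obj Y) ⟶ Y :=
  Over.homMk ⟨fun q => q.1.2.sec q.1.1 q.2, tracked_piEval f Y.hom⟩
    (HHom.ext' (funext fun q => q.1.2.sec_over q.1.1 q.2))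

def baseChangePiAdj (f : B ⟶ A) : baseChange f ⊣ piF f :=
  Adjunction.mkOfHomEquiv
    { homEquiv _ Y :=
        { toFun v := Over.homMk (curryHom f v) (HHom.ext' rfl)
          invFun u := (baseChange f).map u ≫ piCounit f Y
          left_inv _ := over_hom_ext rfl
          right_inv u := over_hom_ext (funext fun z =>
            PiCarrier.ext (over_w_apply u z).symm fun _ _ _ => rfl) }
      homEquiv_naturality_left_symm _ _ := over_hom_ext rfl
      homEquiv_naturality_right _ _ :=
        over_hom_ext (funext fun _ => PiCarrier.ext rfl fun _ _ _ => rfl) }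

end LocallyCartesianClosed

open CategoryTheory.Limits in
/-- `HAsm` is locally cartesian closed: it has pullbacks, and for every
`f : B ⟶ A` the base change functor `f* : HAsm/A ⥤ HAsm/B` (i.e. any right adjoint of
`Over.map f`) has a right adjoint `Π_f`. -/
theorem hasm_locally_cartesian_closed :
    HasPullbacks HAsmObj ∧
    ∀ (A B : HAsmObj) (f : B ⟶ A) (F : Over A ⥤ Over B)
      (_ : CategoryTheory.Over.map f ⊣ F), F.IsLeftAdjoint := by
  refine ⟨inferInstance, fun A B f F adj => ?_⟩
  have := (baseChangePiAdj f).isLeftAdjoint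
  exact Functor.isLeftAdjoint_of_iso ((mapBaseChangeAdj f).rightAdjointUniq adj)

end Herbrand
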